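/- arXiv:2002.08049 — 2 statements merged into one kernel-verified Lean document; each statement's English description precedes it below -/
import Mathlib

section
/- Let 𝔥 be a Hoffman graph with exactly one fat vertex in which every slim vertex is adjacent to the fat vertex, and let G be a non-empty induced subgraph of the slim subgraph of 𝔥. Then the complement of G is connected if and only if the Hoffman subgraph of 𝔥 induced by V(G) together with the fat vertex is indecomposable. -/
/-- A Hoffman graph: a finite simple graph with vertices labeled slim or fat,
fat vertices pairwise non-adjacent, each fat vertex with a slim neighbor. -/
structure HoffmanGraph (V : Type) where
  adj : V → V → Prop
  symm : Symmetric adj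
  irrefl : Irreflexive adj
  slim : V → Prop
  fat_slim_nbr : ∀ x, ¬ slim x → ∃ y, slim y ∧ adj x y
  fat_not_adj : ∀ x y, ¬ slim x → ¬ slim y → ¬ adj x y

namespace HoffmanGraph

variable {V W U : Type}

def slimSet (H : HoffmanGraph V) : Set V := {x | H.slim x}

def toSimple (H : HoffmanGraph V) : SimpleGraph V where
  Adj := H.adj
  symm := ⟨by intro a b h; exact H.symm h⟩
  loopless := ⟨by intro a; exact H.irrefl a⟩

/-- common fat neighbours of `x` and `y` within the carrier set `S`. -/
def fatCommonOn (H : HoffmanGraph V) (S : Set V) (x y : V) : Set V :=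
  {z | z ∈ S ∧ ¬ H.slim z ∧ H.adj x z ∧ H.adj y z}

/-- The induced Hoffman subgraph of `H` on `S` is the sum of the induced subgraphs
on the sets `P i`. -/
def IsSumOn (H : HoffmanGraph V) (S : Set V) {ι : Type} (P : ι → Set V) : Prop :=
  (∀ i, P i ⊆ S) ∧
  (⋃ i, P i) = S ∧
  (∀ x ∈ S, H.slim x → ∃! i, x ∈ P i) ∧
  (∀ i, ∀ x ∈ P i, H.slim x → ∀ z ∈ S, ¬ H.slim z → H.adj x z → z ∈ P i) ∧
  (∀ i, ∀ z ∈ P i, ¬ H.slim z → ∃ x ∈ P i, H.slim x ∧ H.adj z x) ∧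
  (∀ i j, i ≠ j → ∀ x ∈ P i, ∀ y ∈ P j, H.slim x → H.slim y →
    (H.fatCommonOn S x y).ncard ≤ 1 ∧ ((H.fatCommonOn S x y).ncard = 1 ↔ H.adj x y))

/-- Binary sum. -/
def IsSumOn2 (H : HoffmanGraph V) (S A B : Set V) : Prop :=
  H.IsSumOn S (fun b : Bool => if b then A else B)

/-- The induced Hoffman subgraph on `S` is non-empty and not a sum of two non-empty
Hoffman subgraphs. -/
def Indecomposable (H : HoffmanGraph V) (S : Set V) : Prop :=
  S.Nonempty ∧ ∀ A B : Set V, A.Nonempty → B.Nonempty → ¬ H.IsSumOn2 S A B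

/-- `⟪X⟫`: `X` together with the fat neighbours (inside the carrier `S`) of its members. -/
def hind (H : HoffmanGraph V) (S X : Set V) : Set V :=
  X ∪ {z | z ∈ S ∧ ¬ H.slim z ∧ ∃ x ∈ X, H.adj x z}

/-- `e` is an isomorphism of Hoffman graphs. -/
def IsIso (H : HoffmanGraph V) (K : HoffmanGraph W) (e : V ≃ W) : Prop :=
  (∀ x y, H.adj x y ↔ K.adj (e x) (e y)) ∧ ∀ x, (H.slim x ↔ K.slim (e x))

/-- `K` is isomorphic to the induced Hoffman subgraph of `L` on `S`. -/
def IsoToInduced (K : HoffmanGraph W) (L : HoffmanGraph U) (S : Set U) : Prop :=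
  ∃ e : W ≃ S, (∀ x y, K.adj x y ↔ L.adj (e x).1 (e y).1) ∧ ∀ x, (K.slim x ↔ L.slim (e x).1)

/-- `K` is isomorphic to an induced Hoffman subgraph of `L`. -/
def IsSubgraphOf (K : HoffmanGraph W) (L : HoffmanGraph U) : Prop :=
  ∃ S : Set U, IsoToInduced K L S

/-- The induced Hoffman subgraph on `S` is (isomorphic to) `𝔥₂`:
one slim vertex adjacent to two fat vertices. -/
def IsH2On (H : HoffmanGraph V) (S : Set V) : Prop :=
  ∃ s f₁ f₂ : V, f₁ ≠ f₂ ∧ S = {s, f₁, f₂} ∧ H.slim s ∧ ¬ H.slim f₁ ∧ ¬ H.slim f₂ ∧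
    H.adj s f₁ ∧ H.adj s f₂

/-- The induced Hoffman subgraph on `S` belongs to the family `𝔒`: it is `𝔥₂` or an
indecomposable fat Hoffman graph with at least 2 slim vertices and exactly one fat vertex. -/
def MemO (H : HoffmanGraph V) (S : Set V) : Prop :=
  H.IsH2On S ∨
  (H.Indecomposable S ∧ 2 ≤ (S ∩ H.slimSet).ncard ∧
    ∃ w ∈ S, ¬ H.slim w ∧ (∀ z ∈ S, ¬ H.slim z → z = w) ∧ ∀ x ∈ S, H.slim x → H.adj x w)

/-- The induced Hoffman subgraph of `L` on `S` is isomorphic to a member of the family `ℋ`. -/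
def MemFam (ℋ : ∀ W : Type, HoffmanGraph W → Prop) (L : HoffmanGraph U) (S : Set U) : Prop :=
  ∃ (W : Type) (K : HoffmanGraph W), ℋ W K ∧ IsoToInduced K L S

/-- `K` is a sum of members of `ℋ`. -/
def IsCoverGraph (ℋ : ∀ W : Type, HoffmanGraph W → Prop) (K : HoffmanGraph U) : Prop :=
  ∃ (n : ℕ) (P : Fin n → Set U), K.IsSumOn Set.univ P ∧ ∀ i, MemFam ℋ K (P i)

/-- `G` is a slim `ℋ`-line graph. -/
def IsSlimLine (ℋ : ∀ W : Type, HoffmanGraph W → Prop) {V : Type} (G : SimpleGraph V) : Prop :=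
  ∃ (U : Type) (K : HoffmanGraph U) (ι : V → U), Finite U ∧ Function.Injective ι ∧
    (∀ a, K.slim (ι a)) ∧ (∀ a b, G.Adj a b ↔ K.adj (ι a) (ι b)) ∧ IsCoverGraph ℋ K

/-- `K` (with slim vertices identified with `V(G)` via `ι`) is a strict `ℋ`-cover of `G`. -/
def IsStrictCover (ℋ : ∀ W : Type, HoffmanGraph W → Prop) {V U : Type}
    (G : SimpleGraph V) (K : HoffmanGraph U) (ι : V → U) : Prop :=
  Finite U ∧ Function.Injective ι ∧ (∀ a b, G.Adj a b ↔ K.adj (ι a) (ι b)) ∧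
  (∀ u, K.slim u ↔ ∃ a, ι a = u) ∧ IsCoverGraph ℋ K

/-- Two strict covers are equivalent: an isomorphism restricting to the identity on `G`. -/
def EquivCovers {V U U' : Type} (K : HoffmanGraph U) (ι : V → U)
    (K' : HoffmanGraph U') (ι' : V → U') : Prop :=
  ∃ φ : U ≃ U', IsIso K K' φ ∧ ∀ a, φ (ι a) = ι' a

/-- The family `ℋ̄ = {𝔥₂} ∪ {𝔤 ∈ 𝔒 : 𝔤 is a Hoffman subgraph of a member of ℋ}`. -/
def BarFam (ℋ : ∀ W : Type, HoffmanGraph W → Prop) : ∀ W : Type, HoffmanGraph W → Prop :=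
  fun _ K => K.IsH2On Set.univ ∨
    (K.MemO Set.univ ∧ ∃ (U : Type) (L : HoffmanGraph U), ℋ U L ∧ IsSubgraphOf K L)

/-- `G` has a strict `ℱ`-cover and it is unique up to equivalence. -/
def UniqueStrictCover (ℱ : ∀ W : Type, HoffmanGraph W → Prop) {V : Type}
    (G : SimpleGraph V) : Prop :=
  (∃ (U : Type) (K : HoffmanGraph U) (ι : V → U), IsStrictCover ℱ G K ι) ∧
  ∀ (U U' : Type) (K : HoffmanGraph U) (K' : HoffmanGraph U') (ι : V → U) (ι' : V → U'),
    IsStrictCover ℱ G K ι → IsStrictCover ℱ G K' ι' → EquivCovers K ι K' ι'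

end HoffmanGraph
open HoffmanGraph in
private lemma reach_mem {α : Type} {G : SimpleGraph α} {T : Set α}
    (hT : ∀ p q, G.Adj p q → p ∈ T → q ∈ T) {p q : α}
    (h : G.Reachable p q) : p ∈ T → q ∈ T := by
  obtain ⟨wlk⟩ := h
  induction wlk with
  | nil => exact id
  | cons ha _ ih => exact fun hp => ih (hT _ _ ha hp)

open HoffmanGraph in
/-- For a Hoffman graph with a unique fat vertex adjacent to all slim vertices and a
non-empty set `X` of slim vertices, the complement of the induced graph on `X` is
connected iff the Hoffman subgraph induced by `X` together with the fat vertex is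
indecomposable. -/
theorem stmt5 {V : Type} [Fintype V] (H : HoffmanGraph V) (w : V)
    (hw : ¬ H.slim w) (huniq : ∀ z, ¬ H.slim z → z = w)
    (hadj : ∀ x, H.slim x → H.adj x w)
    (X : Set V) (hX : X ⊆ H.slimSet) (hXne : X.Nonempty) :
    ((H.toSimple.induce X)ᶜ).Connected ↔ H.Indecomposable (X ∪ {w}) := by

  classical
  set S : Set V := X ∪ {w} with hS
  have hfc : ∀ x y : V, H.slim x → H.slim y → H.fatCommonOn S x y = {w} := by
    intro x y hx hy
    ext z
    simp only [fatCommonOn, Set.mem_setOf_eq, Set.mem_singleton_iff]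
    constructor
    · rintro ⟨_, hzf, _, _⟩; exact huniq z hzf
    · rintro rfl
      exact ⟨Or.inr rfl, hw, hadj x hx, hadj y hy⟩
  have hfc1 : ∀ x y : V, H.slim x → H.slim y →
      (H.fatCommonOn S x y).ncard = 1 := by
    intro x y hx hy; rw [hfc x y hx hy]; exact Set.ncard_singleton w
  have hmemX : ∀ x ∈ S, H.slim x → x ∈ X := by
    intro x hxS hx
    rcases hxS with h | h
    · exact h
    · exact absurd hx (by rw [Set.mem_singleton_iff] at h; rw [h]; exact hw)
  have hindadj : ∀ (a b : ↥X), ((H.toSimple.induce X)ᶜ).Adj a b ↔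
      (a ≠ b ∧ ¬ H.adj a.1 b.1) := by
    intro a b
    rw [SimpleGraph.compl_adj]
    simp [SimpleGraph.comap_adj, toSimple, SimpleGraph.induce]
  constructor
  · intro hc
    refine ⟨⟨hXne.choose, Or.inl hXne.choose_spec⟩, ?_⟩
    intro A B hA hB hsum
    unfold IsSumOn2 IsSumOn at hsum
    obtain ⟨hsub, hun, huni, hfatmem, hfatnbr, hcross⟩ := hsum
    set P : Bool → Set V := fun b : Bool => if b then A else B with hP
    have hPA : P true = A := by simp [hP]
    have hPB : P false = B := by simp [hP]
    have slimIn : ∀ i : Bool, (P i).Nonempty → ∃ x, x ∈ P i ∧ H.slim x := by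
      rintro i ⟨a, ha⟩
      by_cases hs : H.slim a
      · exact ⟨a, ha, hs⟩
      · obtain ⟨x, hxP, hxs, _⟩ := hfatnbr i a ha hs
        exact ⟨x, hxP, hxs⟩
    obtain ⟨a, haP, has⟩ := slimIn true (hPA ▸ hA)
    obtain ⟨b, hbP, hbs⟩ := slimIn false (hPB ▸ hB)
    have haX : a ∈ X := hmemX a (hsub true haP) has
    have hbX : b ∈ X := hmemX b (hsub false hbP) hbs
    have hxy : ∀ x ∈ P true, ∀ y ∈ P false, H.slim x → H.slim y → H.adj x y := by
      intro x hx y hy hsx hsy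
      exact (hcross true false (by decide) x hx y hy hsx hsy).2.mp (hfc1 x y hsx hsy)
    -- the set of vertices of X lying in P true is closed under complement adjacency
    have hclosed : ∀ p q : ↥X, ((H.toSimple.induce X)ᶜ).Adj p q →
        p.1 ∈ P true → q.1 ∈ P true := by
      intro p q hpq hp
      obtain ⟨i, hqi, hqu⟩ := huni q.1 (Or.inl q.2) (hX q.2)
      cases i with
      | true => exact hqi
      | false =>
        exact absurd (hxy p.1 hp q.1 hqi (hX p.2) (hX q.2))
          ((hindadj p q).mp hpq).2
    have hreach := hc.preconnected ⟨a, haX⟩ ⟨b, hbX⟩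
    have hbA : b ∈ P true := reach_mem hclosed hreach haP
    obtain ⟨i, _, hqu⟩ := huni b (Or.inl hbX) hbs
    have h1 := hqu true hbA
    have h2 := hqu false hbP
    exact absurd (h1.trans h2.symm) (by decide)
  · intro hind
    rw [SimpleGraph.connected_iff]
    refine ⟨?_, ⟨⟨hXne.choose, hXne.choose_spec⟩⟩⟩
    by_contra hpc
    rw [SimpleGraph.Preconnected] at hpc
    push_neg at hpc
    obtain ⟨u, v, huv⟩ := hpc
    set X₁ : Set V := {x | ∃ h : x ∈ X, ((H.toSimple.induce X)ᶜ).Reachable u ⟨x, h⟩}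
      with hX1
    set X₂ : Set V := X \ X₁ with hX2
    have hu1 : u.1 ∈ X₁ := ⟨u.2, by exact SimpleGraph.Reachable.refl u⟩
    have hv1 : v.1 ∈ X₂ := by
      refine ⟨v.2, ?_⟩
      rintro ⟨hvX, hr⟩
      exact huv hr
    have hX1X : X₁ ⊆ X := fun x hx => hx.1
    have hcrossadj : ∀ x ∈ X₁, ∀ y ∈ X₂, H.adj x y := by
      intro x hx y hy
      obtain ⟨hxX, hrx⟩ := hx
      have hyX := hy.1
      have hne' : x ≠ y := by rintro rfl; exact hy.2 ⟨hxX, hrx⟩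
      by_contra hadj'
      have hGc : ((H.toSimple.induce X)ᶜ).Adj ⟨x, hxX⟩ ⟨y, hyX⟩ :=
        (hindadj _ _).mpr ⟨by simpa [Subtype.ext_iff] using hne', hadj'⟩
      exact hy.2 ⟨hyX, hrx.trans hGc.reachable⟩
    refine hind.2 (X₁ ∪ {w}) (X₂ ∪ {w}) ⟨u.1, Or.inl hu1⟩ ⟨v.1, Or.inl hv1⟩ ?_
    unfold IsSumOn2 IsSumOn
    set P : Bool → Set V := fun b : Bool => if b then X₁ ∪ {w} else X₂ ∪ {w} with hP
    have hPsub : ∀ i, P i ⊆ S := by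
      intro i x hx
      cases i <;> simp only [hP, if_true, if_false, Bool.false_eq_true] at hx <;>
        rcases hx with h | h
      · exact Or.inl h.1
      · exact Or.inr h
      · exact Or.inl (hX1X h)
      · exact Or.inr h
    have hmem1 : ∀ x ∈ X, x ∈ X₁ ∨ x ∈ X₂ := by
      intro x hxX
      by_cases h : x ∈ X₁
      · exact Or.inl h
      · exact Or.inr ⟨hxX, h⟩
    refine ⟨hPsub, ?_, ?_, ?_, ?_, ?_⟩
    · ext z
      simp only [Set.mem_iUnion]
      constructor
      · rintro ⟨i, hi⟩; exact hPsub i hi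
      · rintro (hz | hz)
        · rcases hmem1 z hz with h | h
          · exact ⟨true, by simp [hP, h]⟩
          · exact ⟨false, by simp [hP, h]⟩
        · exact ⟨true, show z ∈ X₁ ∪ {w} from Or.inr hz⟩
    · intro x hxS hxs
      have hxX : x ∈ X := hmemX x hxS hxs
      have hxw : x ≠ w := fun h => hw (h ▸ hxs)
      rcases hmem1 x hxX with h | h
      · refine ⟨true, by simp [hP, h], ?_⟩
        rintro (_ | _) hy
        · simp only [hP, if_false, Bool.false_eq_true] at hy
          rcases hy with hy | hy
          · exact absurd h hy.2
          · exact absurd hy hxw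
        · rfl
      · refine ⟨false, by simp [hP, h], ?_⟩
        rintro (_ | _) hy
        · rfl
        · simp only [hP, if_true] at hy
          rcases hy with hy | hy
          · exact absurd hy h.2
          · exact absurd hy hxw
    · intro i x _ _ z _ hzf _
      have : z = w := huniq z hzf
      cases i <;> simp [hP, this]
    · intro i z hz hzf
      have hzw : z = w := huniq z hzf
      cases i with
      | false =>
        refine ⟨v.1, show v.1 ∈ X₂ ∪ {w} from Or.inl hv1, hX v.2, ?_⟩
        rw [hzw]; exact H.symm (hadj v.1 (hX v.2))
      | true =>
        refine ⟨u.1, show u.1 ∈ X₁ ∪ {w} from Or.inl hu1, hX u.2, ?_⟩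
        rw [hzw]; exact H.symm (hadj u.1 (hX u.2))
    · intro i j hij x hx y hy hsx hsy
      have hxw : x ≠ w := fun h => hw (h ▸ hsx)
      have hyw : y ≠ w := fun h => hw (h ▸ hsy)
      have key : H.adj x y := by
        cases i <;> cases j
        · exact absurd rfl hij
        · -- i = false, j = true : x ∈ X₂, y ∈ X₁
          simp only [hP, if_true, if_false, Bool.false_eq_true] at hx hy
          rcases hx with hx | hx
          · rcases hy with hy | hy
            · exact H.symm (hcrossadj y hy x hx)
            · exact absurd hy hyw
          · exact absurd hx hxw
        · simp only [hP, if_true, if_false, Bool.false_eq_true] at hx hy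
          rcases hx with hx | hx
          · rcases hy with hy | hy
            · exact hcrossadj x hx y hy
            · exact absurd hy hyw
          · exact absurd hx hxw
        · exact absurd rfl hij
      exact ⟨(hfc1 x y hsx hsy).le, ⟨fun _ => key, fun _ => hfc1 x y hsx hsy⟩⟩
end

section
/- Let 𝔥 = 𝔫 ⊕ 𝔪 be a Hoffman graph with 𝔫 and 𝔪 non-empty, and let ψ be an automorphism of 𝔥 fixing every slim vertex. Then ψ(x) = x for every fat vertex x ∈ V_f(𝔫) ∩ V_f(𝔪). -/
open HoffmanGraph in
/-- An automorphism of `𝔥 = 𝔫 ⊕ 𝔪` fixing every slim vertex fixes every common fat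
vertex of `𝔫` and `𝔪`. -/
theorem stmt8 {V : Type} [Fintype V] (H : HoffmanGraph V) (A B : Set V)
    (hA : A.Nonempty) (hB : B.Nonempty) (hsum : H.IsSumOn2 Set.univ A B)
    (ψ : V ≃ V) (hψ : IsIso H H ψ) (hfix : ∀ x, H.slim x → ψ x = x) :
    ∀ x ∈ A ∩ B, ¬ H.slim x → ψ x = x := by
  obtain ⟨hsub, hun, huniq, hcl, hfatnbr, hcard⟩ := hsum
  intro z hz hfz
  obtain ⟨hzA, hzB⟩ := hz
  obtain ⟨x, hxA, hxs, hxadj⟩ := hfatnbr true z (by simpa using hzA) hfz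
  obtain ⟨y, hyB, hys, hyadj⟩ := hfatnbr false z (by simpa using hzB) hfz
  have hxy : x ≠ y := by
    rintro rfl
    obtain ⟨i, hi, hiu⟩ := huniq x (Set.mem_univ x) hxs
    have h1 := hiu true (by simpa using hxA)
    have h2 := hiu false (by simpa using hyB)
    exact absurd (h1.trans h2.symm) (by decide)
  obtain ⟨hle, -⟩ := hcard true false (by simp) x (by simpa using hxA) y (by simpa using hyB)
    hxs hys
  have hzmem : z ∈ H.fatCommonOn Set.univ x y :=
    ⟨Set.mem_univ z, hfz, H.symm hxadj, H.symm hyadj⟩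
  have hψz : ψ z ∈ H.fatCommonOn Set.univ x y := by
    refine ⟨Set.mem_univ _, fun hs => hfz ?_, ?_, ?_⟩
    · exact (hψ.2 z).mpr hs
    · have := (hψ.1 x z).mp (H.symm hxadj)
      rwa [hfix x hxs] at this
    · have := (hψ.1 y z).mp (H.symm hyadj)
      rwa [hfix y hys] at this
  exact ((Set.ncard_le_one (Set.toFinite _)).mp hle) _ hψz _ hzmem
end
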